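/- arXiv:2001.04713 — 6 statements merged into one kernel-verified Lean document; each statement's English description precedes it below -/
import Mathlib

section
/- No classical (possibly irreversible) strategy for the 32-Game wins with probability greater than 7/9: for any function x : {0,1,2} → {0,1} (Alice's message) and any function y : {0,1} × {0,1,2} → {0,1} (Bob's output given the received bit and his input), the probability over uniform a,b ∈ {0,1,2} that y(x(a), b) = (if a=b then 1 else 0) is at most 7/9. -/
lemma aux32 (x : Fin 3 → Bool) (y : Bool → Fin 3 → Bool) :
    (∑ a : Fin 3, ∑ b : Fin 3,
        (if y (x a) b = (a = b : Bool) then (1 : ℕ) else 0)) ≤ 7 := by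
  have : ∀ u v w f0 f1 f2 t0 t1 t2 : Bool,
      (if (cond u t0 f0) = true then 1 else 0) + ((if (cond u t1 f1) = false then 1 else 0)
        + (if (cond u t2 f2) = false then 1 else 0))
      + ((if (cond v t0 f0) = false then 1 else 0) + ((if (cond v t1 f1) = true then 1 else 0)
        + (if (cond v t2 f2) = false then 1 else 0))
      + ((if (cond w t0 f0) = false then 1 else 0) + ((if (cond w t1 f1) = false then 1 else 0)
        + (if (cond w t2 f2) = true then 1 else 0)))) ≤ 7 := by decide
  have h := this (x 0) (x 1) (x 2) (y false 0) (y false 1) (y false 2)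
    (y true 0) (y true 1) (y true 2)
  simp only [Fin.sum_univ_three]
  have e : ∀ (u : Bool) (b : Fin 3), cond u (y true b) (y false b) = y u b := by
    intro u b; cases u <;> rfl
  simp only [e] at h
  simp only [show ((0:Fin 3)=0:Bool)=true from rfl, show ((0:Fin 3)=1:Bool)=false from rfl, show ((0:Fin 3)=2:Bool)=false from rfl, show ((1:Fin 3)=0:Bool)=false from rfl, show ((1:Fin 3)=1:Bool)=true from rfl, show ((1:Fin 3)=2:Bool)=false from rfl, show ((2:Fin 3)=0:Bool)=false from rfl, show ((2:Fin 3)=1:Bool)=false from rfl, show ((2:Fin 3)=2:Bool)=true from rfl, show (decide True)=true from rfl]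
  omega
  
/-- No classical (possibly irreversible) strategy for the 32-Game wins with
probability > 7/9: Alice sends a bit x(a), Bob outputs y(x(a), b). -/
theorem stmt_2 (x : Fin 3 → Bool) (y : Bool → Fin 3 → Bool) :
    (∑ a : Fin 3, ∑ b : Fin 3,
        (if y (x a) b = (a = b : Bool) then (1 : ℚ) else 0)) / 9 ≤ 7 / 9 := by
  have h := aux32 x y
  have : (∑ a : Fin 3, ∑ b : Fin 3,
      (if y (x a) b = (a = b : Bool) then (1 : ℚ) else 0)) ≤ 7 := by
    calc (∑ a : Fin 3, ∑ b : Fin 3,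
        (if y (x a) b = (a = b : Bool) then (1 : ℚ) else 0))
        = ((∑ a : Fin 3, ∑ b : Fin 3,
          (if y (x a) b = (a = b : Bool) then (1 : ℕ) else 0) : ℕ) : ℚ) := by
          push_cast [apply_ite (Nat.cast : ℕ → ℚ)]; rfl
      _ ≤ 7 := by exact_mod_cast h
  linarith
end

section
/- If x : {0,1,2} → {0,1} is constant (Alice sends no information), then for any Bob strategy y : {0,1} × {0,1,2} → {0,1}, the winning probability in the 32-Game is at most 2/3. -/
/-- If Alice's message is constant, any Bob strategy wins the 32-Game with
probability at most 2/3. -/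
theorem stmt_3 (x : Fin 3 → Bool) (hx : ∀ a a' : Fin 3, x a = x a')
    (y : Bool → Fin 3 → Bool) :
    (∑ a : Fin 3, ∑ b : Fin 3,
        (if y (x a) b = (a = b : Bool) then (1 : ℚ) else 0)) / 9 ≤ 2 / 3 := by
  have h1 : x 1 = x 0 := hx 1 0
  have h2 : x 2 = x 0 := hx 2 0
  simp only [Fin.sum_univ_three, h1, h2]
  rcases Bool.eq_false_or_eq_true (y (x 0) 0) with h0 | h0 <;>
  rcases Bool.eq_false_or_eq_true (y (x 0) 1) with hb1 | hb1 <;>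
  rcases Bool.eq_false_or_eq_true (y (x 0) 2) with hb2 | hb2 <;>
  simp [h0, hb1, hb2] <;> norm_num
end

section
/- The quantum reversible strategy A_a = X · R^a, B_b = R^(2b), where R is the rotation matrix [[cos(π/3), -i sin(π/3)], [-i sin(π/3), cos(π/3)]], wins the 32-Game with probability 5/6: for uniform a,b ∈ {0,1,2}, the probability that measuring B_b A_a |0⟩ in the computational basis yields δ_{ab} equals 5/6. -/
open Matrix

/-- The 2π/3 x-rotation matrix. -/
noncomputable def rotR : Matrix (Fin 2) (Fin 2) ℂ :=
  !![1 / 2, -Complex.I * (Real.sqrt 3 / 2);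
     -Complex.I * (Real.sqrt 3 / 2), 1 / 2]

/-- The Pauli bit-flip. -/
def pauliX : Matrix (Fin 2) (Fin 2) ℂ := !![0, 1; 1, 0]

/-- The basis state |0⟩. -/
def ket0 : Fin 2 → ℂ := fun i => if i = 0 then 1 else 0

lemma hIs : Complex.I ^ 2 * ((Real.sqrt 3 : ℝ) : ℂ) ^ 2 = -3 := by
  have : ((Real.sqrt 3 : ℝ) : ℂ) ^ 2 = 3 := by
    norm_cast; exact Real.sq_sqrt (by norm_num)
  rw [this, Complex.I_sq]; ring

lemma mulVec_ket0 (M : Matrix (Fin 2) (Fin 2) ℂ) (i : Fin 2) :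
    M.mulVec ket0 i = M i 0 := by
  simp [Matrix.mulVec, dotProduct, ket0, Fin.sum_univ_two]

lemma rot2 : rotR ^ 2 =
    !![-(1/2), -Complex.I * (Real.sqrt 3 / 2); -Complex.I * (Real.sqrt 3 / 2), -(1/2)] := by
  ext i j
  fin_cases i <;> fin_cases j <;>
    simp [pow_two, rotR, Matrix.mul_apply, Fin.sum_univ_two] <;>
    first
      | ring1
      | linear_combination (1/4 : ℂ) * hIs

lemma rot4 : rotR ^ 4 =
    !![-(1/2), Complex.I * (Real.sqrt 3 / 2); Complex.I * (Real.sqrt 3 / 2), -(1/2)] := by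
  rw [show (4:ℕ) = 2 + 2 from rfl, pow_add, rot2]
  ext i j
  fin_cases i <;> fin_cases j <;>
    simp [Matrix.mul_apply, Fin.sum_univ_two] <;>
    first
      | ring1
      | linear_combination (1/4 : ℂ) * hIs

/-- The quantum reversible strategy A_a = X·R^a, B_b = R^(2b) wins the 32-Game
with probability 5/6: measuring B_b A_a |0⟩ in the computational basis yields
outcome δ_{ab} with overall probability 5/6 over uniform a,b ∈ {0,1,2}. -/
theorem stmt_4 :
    (∑ a : Fin 3, ∑ b : Fin 3,
        (if a = b then
          Complex.normSq (((rotR ^ (2 * (b : ℕ)) * (pauliX * rotR ^ (a : ℕ))).mulVec ket0) 1)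
        else
          Complex.normSq (((rotR ^ (2 * (b : ℕ)) * (pauliX * rotR ^ (a : ℕ))).mulVec ket0) 0)))
      / 9 = 5 / 6 := by
  have hss : Real.sqrt 3 * Real.sqrt 3 = 3 := Real.mul_self_sqrt (by norm_num)
  simp only [Fin.sum_univ_three, Fin.isValue, Fin.val_zero, Fin.val_one, Fin.val_two,
    mulVec_ket0, Nat.mul_zero, Nat.mul_one, Nat.reduceMul, pow_zero, pow_one,
    rot2, rot4, Matrix.one_mul, Matrix.mul_one]
  simp only [rotR, pauliX, Matrix.mul_fin_two]
  norm_num [Fin.ext_iff, Matrix.cons_val_zero, Matrix.cons_val_one, Matrix.head_cons,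
    Matrix.head_fin_const,
    Complex.normSq_apply, Complex.add_re, Complex.add_im, Complex.mul_re, Complex.mul_im,
    Complex.I_re, Complex.I_im, Complex.ofReal_re, Complex.ofReal_im,
    Complex.neg_re, Complex.neg_im, Complex.ofReal_div, Complex.div_re, Complex.div_im]
  nlinarith [hss, Real.sqrt_nonneg 3]
end

section
/- Helstrom bound (qubit case): for density matrices ρ, σ on ℂ² and priors p, q ≥ 0 with p+q=1, any two-outcome POVM {E, I−E} (with 0 ≤ E ≤ I) discriminating ρ from σ succeeds with probability p·tr(Eρ) + q·tr((I−E)σ) ≤ 1/2 + (1/2)·‖pρ − qσ‖₁, where ‖A‖₁ = tr√(A†A). -/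
/-! With `Δ = pρ - qσ` the success probability equals `q + tr(EΔ)`. Since `Δ ≤ Δ⁺` and `0 ≤ E ≤ 1`,
`tr(EΔ) ≤ tr(EΔ⁺) ≤ tr Δ⁺ = (tr Δ + ‖Δ‖₁) / 2`, and `tr Δ = p - q`. -/

open Matrix ComplexOrder

/-- The trace norm ‖A‖₁ = tr √(AᴴA) of a 2×2 complex matrix. -/
noncomputable def traceNorm (A : Matrix (Fin 2) (Fin 2) ℂ) : ℝ :=
  (((Matrix.posSemidef_conjTranspose_mul_self A).1.eigenvectorUnitary : Matrix (Fin 2) (Fin 2) ℂ) *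
    diagonal (((↑) : ℝ → ℂ) ∘ (fun x : ℝ => √x) ∘ (Matrix.posSemidef_conjTranspose_mul_self A).1.eigenvalues) *
    (star (Matrix.posSemidef_conjTranspose_mul_self A).1.eigenvectorUnitary : Matrix (Fin 2) (Fin 2) ℂ)).trace.re

open scoped MatrixOrder

namespace Matrix

variable {n : Type*} [Fintype n] [DecidableEq n]

lemma PosSemidef.re_trace_mul_nonneg {A B : Matrix n n ℂ} (hA : A.PosSemidef) (hB : B.PosSemidef) :
    0 ≤ (A * B).trace.re := by
  obtain ⟨C, rfl⟩ := CStarAlgebra.nonneg_iff_eq_star_mul_self.mp hB.nonneg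
  rw [← mul_assoc, trace_mul_comm, ← mul_assoc, star_eq_conjTranspose]
  exact (Complex.nonneg_iff.mp (hA.mul_mul_conjTranspose_same C).trace_nonneg).1

lemma IsHermitian.re_trace_cfc {A : Matrix n n ℂ} (hA : A.IsHermitian) (f : ℝ → ℝ) :
    (cfc f A).trace.re = ∑ i, f (hA.eigenvalues i) := by
  rw [hA.cfc_eq, IsHermitian.cfc, Unitary.conjStarAlgAut_apply, trace_mul_cycle,
    Unitary.coe_star_mul_self, one_mul, trace_diagonal, Complex.re_sum]
  simp

lemma IsHermitian.re_trace_eq_sum_eigenvalues {A : Matrix n n ℂ} (hA : A.IsHermitian) :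
    A.trace.re = ∑ i, hA.eigenvalues i := by
  simp [hA.trace_eq_sum_eigenvalues]

lemma IsHermitian.re_trace_mul_le_sum_posPart {A E : Matrix n n ℂ} (hA : A.IsHermitian)
    (hE : E.PosSemidef) (hE1 : (1 - E).PosSemidef) :
    (E * A).trace.re ≤ ∑ i, (hA.eigenvalues i)⁺ := by
  set P := cfc (fun x : ℝ => x⁺) A
  have hP : P.PosSemidef := (cfc_nonneg fun x _ => posPart_nonneg x).posSemidef
  have hAP : A ≤ P := by
    conv_lhs => rw [← cfc_id' ℝ A]
    exact cfc_mono fun x _ => le_posPart x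
  have h₁ := hE.re_trace_mul_nonneg hAP
  have h₂ := hE1.re_trace_mul_nonneg hP
  rw [mul_sub, trace_sub, Complex.sub_re] at h₁
  rw [sub_mul, one_mul, trace_sub, Complex.sub_re] at h₂
  rw [← hA.re_trace_cfc]
  linarith

end Matrix

lemma traceNorm_eq_re_trace_cfc_sqrt (A : Matrix (Fin 2) (Fin 2) ℂ) :
    traceNorm A = (cfc Real.sqrt (Aᴴ * A)).trace.re := by
  rw [traceNorm, (posSemidef_conjTranspose_mul_self A).1.cfc_eq, IsHermitian.cfc,
    Unitary.conjStarAlgAut_apply]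
  rfl

lemma Matrix.IsHermitian.traceNorm_eq_sum_abs_eigenvalues {A : Matrix (Fin 2) (Fin 2) ℂ}
    (hA : A.IsHermitian) : traceNorm A = ∑ i, |hA.eigenvalues i| := by
  have hsq : Aᴴ * A = A ^ 2 := by rw [hA.eq, sq]
  rw [traceNorm_eq_re_trace_cfc_sqrt, hsq, ← cfc_comp_pow Real.sqrt 2 A, ← hA.re_trace_cfc]
  simp_rw [Real.sqrt_sq_eq_abs]

lemma Matrix.IsHermitian.re_trace_mul_le {A E : Matrix (Fin 2) (Fin 2) ℂ} (hA : A.IsHermitian)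
    (hE : E.PosSemidef) (hE1 : (1 - E).PosSemidef) :
    (E * A).trace.re ≤ (A.trace.re + traceNorm A) / 2 := by
  rw [hA.re_trace_eq_sum_eigenvalues, hA.traceNorm_eq_sum_abs_eigenvalues, ← Finset.sum_add_distrib,
    Finset.sum_div]
  refine (hA.re_trace_mul_le_sum_posPart hE hE1).trans_eq (Finset.sum_congr rfl fun i _ => ?_)
  rw [add_abs_eq_two_nsmul_posPart]
  simp

theorem stmt_6_general (ρ σ E : Matrix (Fin 2) (Fin 2) ℂ)
    (hρ : ρ.PosSemidef) (hρ1 : ρ.trace = 1)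
    (hσ : σ.PosSemidef) (hσ1 : σ.trace = 1)
    (p q : ℝ) (hpq : p + q = 1)
    (hE : E.PosSemidef) (hE1 : (1 - E).PosSemidef) :
    p * (E * ρ).trace.re + q * ((1 - E) * σ).trace.re ≤
      1 / 2 + 1 / 2 * traceNorm ((p : ℂ) • ρ - (q : ℂ) • σ) := by
  set Δ := (p : ℂ) • ρ - (q : ℂ) • σ
  have hΔ : Δ.IsHermitian :=
    (hρ.1.smul (Complex.conj_ofReal p)).sub (hσ.1.smul (Complex.conj_ofReal q))
  have hbound := hΔ.re_trace_mul_le hE hE1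
  have htrΔ : Δ.trace.re = p - q := by simp [Δ, hρ1, hσ1]
  have hEΔ : (E * Δ).trace.re = p * (E * ρ).trace.re - q * (E * σ).trace.re := by
    simp [Δ, mul_sub, trace_sub]
  have hEσ : ((1 - E) * σ).trace.re = 1 - (E * σ).trace.re := by
    simp [sub_mul, trace_sub, hσ1]
  rw [hEσ]
  linarith

/-- Helstrom bound (qubit case): for density matrices ρ, σ with priors p, q and
any POVM element 0 ≤ E ≤ I, the discrimination success probability satisfies
p·tr(Eρ) + q·tr((I−E)σ) ≤ 1/2 + (1/2)‖pρ − qσ‖₁. -/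
theorem stmt_6 (ρ σ E : Matrix (Fin 2) (Fin 2) ℂ)
    (hρ : ρ.PosSemidef) (hρ1 : ρ.trace = 1)
    (hσ : σ.PosSemidef) (hσ1 : σ.trace = 1)
    (p q : ℝ) (hp : 0 ≤ p) (hq : 0 ≤ q) (hpq : p + q = 1)
    (hE : E.PosSemidef) (hE1 : (1 - E).PosSemidef) :
    p * (E * ρ).trace.re + q * ((1 - E) * σ).trace.re ≤
      1 / 2 + 1 / 2 * traceNorm ((p : ℂ) • ρ - (q : ℂ) • σ) :=
  stmt_6_general ρ σ E hρ hρ1 hσ hσ1 p q hpq hE hE1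
end

section
/- For any qubit density matrices ρ₀, ρ₁, ρ₂ with Bloch vectors v₀, v₁, v₂ (‖vᵢ‖₂ ≤ 1), one has Σᵢ₌₀² max(1, ‖vᵢ − v_{i+1} − v_{i+2}‖₂) ≤ 6, with indices mod 3. -/
open RealInnerProductSpace

lemma aux_key (a b c : EuclideanSpace ℝ (Fin 3)) :
    ‖a - b - c‖ ^ 2 + ‖b - c - a‖ ^ 2 + ‖c - a - b‖ ^ 2 + ‖a + b + c‖ ^ 2
      = 4 * (‖a‖ ^ 2 + ‖b‖ ^ 2 + ‖c‖ ^ 2) := by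
  have h : ∀ x : EuclideanSpace ℝ (Fin 3), ‖x‖ ^ 2 = ⟪x, x⟫ := fun x =>
    (real_inner_self_eq_norm_sq x).symm
  rw [h, h, h, h, h, h, h]
  simp only [inner_sub_left, inner_sub_right, inner_add_left, inner_add_right,
    real_inner_comm b a, real_inner_comm c a, real_inner_comm c b]
  ring

set_option maxHeartbeats 1000000 in
lemma aux_real (t1 t2 t3 : ℝ) (h1 : 0 ≤ t1) (h2 : 0 ≤ t2) (h3 : 0 ≤ t3)
    (u1 : t1 ≤ 3) (u2 : t2 ≤ 3) (u3 : t3 ≤ 3)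
    (hs : t1 ^ 2 + t2 ^ 2 + t3 ^ 2 ≤ 12) :
    max 1 t1 + max 1 t2 + max 1 t3 ≤ 6 := by
  rcases le_total t1 1 with c1 | c1 <;> rcases le_total t2 1 with c2 | c2 <;>
    rcases le_total t3 1 with c3 | c3
  all_goals first
    | rw [max_eq_left c1]
    | rw [max_eq_right c1]
  all_goals first
    | rw [max_eq_left c2]
    | rw [max_eq_right c2]
  all_goals first
    | rw [max_eq_left c3]
    | rw [max_eq_right c3]
  all_goals nlinarith [sq_nonneg (t1 - t2), sq_nonneg (t2 - t3), sq_nonneg (t1 - t3),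
      sq_nonneg (t1 + t2), sq_nonneg (t2 + t3), sq_nonneg (t1 + t3)]

/-- For Bloch vectors v₀,v₁,v₂ of qubit density matrices (i.e. any vectors in the
closed unit ball of ℝ³), Σᵢ max(1, ‖vᵢ − v_{i+1} − v_{i+2}‖) ≤ 6 (indices mod 3). -/
theorem stmt_13 (v : Fin 3 → EuclideanSpace ℝ (Fin 3)) (hv : ∀ i, ‖v i‖ ≤ 1) :
    (∑ i : Fin 3, max 1 ‖v i - v (i + 1) - v (i + 2)‖) ≤ 6 := by
  have ha := hv 0
  have hb := hv 1
  have hc := hv 2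
  rw [Fin.sum_univ_three]
  have e1 : (0 : Fin 3) + 1 = 1 := rfl
  have e2 : (0 : Fin 3) + 2 = 2 := rfl
  have e3 : (1 : Fin 3) + 1 = 2 := rfl
  have e4 : (1 : Fin 3) + 2 = 0 := rfl
  have e5 : (2 : Fin 3) + 1 = 0 := rfl
  have e6 : (2 : Fin 3) + 2 = 1 := rfl
  rw [e1, e2, e3, e4, e5, e6]
  set a := v 0
  set b := v 1
  set c := v 2
  have key := aux_key a b c
  have hsq : ‖a - b - c‖ ^ 2 + ‖b - c - a‖ ^ 2 + ‖c - a - b‖ ^ 2 ≤ 12 := by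
    nlinarith [sq_nonneg ‖a + b + c‖, norm_nonneg a, norm_nonneg b, norm_nonneg c]
  have u1 : ‖a - b - c‖ ≤ 3 := by
    calc ‖a - b - c‖ ≤ ‖a - b‖ + ‖c‖ := norm_sub_le _ _
    _ ≤ ‖a‖ + ‖b‖ + ‖c‖ := by linarith [norm_sub_le a b]
    _ ≤ 3 := by linarith
  have u2 : ‖b - c - a‖ ≤ 3 := by
    calc ‖b - c - a‖ ≤ ‖b - c‖ + ‖a‖ := norm_sub_le _ _
    _ ≤ ‖b‖ + ‖c‖ + ‖a‖ := by linarith [norm_sub_le b c]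
    _ ≤ 3 := by linarith
  have u3 : ‖c - a - b‖ ≤ 3 := by
    calc ‖c - a - b‖ ≤ ‖c - a‖ + ‖b‖ := norm_sub_le _ _
    _ ≤ ‖c‖ + ‖a‖ + ‖b‖ := by linarith [norm_sub_le c a]
    _ ≤ 3 := by linarith
  exact aux_real _ _ _ (norm_nonneg _) (norm_nonneg _) (norm_nonneg _) u1 u2 u3 hsq
end

section
/- For a binary-output two-player single-system game with a classical bit of memory: if for every Bob input b, the prior-weighted count of inputs where output 0 wins equals that where output 1 wins (Σ_a p_{a,b} W_{a,b}^{(0)} = Σ_a p_{a,b} W_{a,b}^{(1)} for all b), then for every strategy using erasure gates there is a strategy using only reversible gates (identity and bit-flip) winning with at least the same probability. -/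
lemma bool_bij_or_const (f : Bool → Bool) :
    Function.Bijective f ∨ f true = f false := by
  by_cases h : f true = f false
  · exact Or.inr h
  · left
    have hinj : Function.Injective f := by
      intro x y hxy
      cases x <;> cases y <;> simp_all
    exact Finite.injective_iff_bijective.mp hinj

lemma not_bij : Function.Bijective Bool.not :=
  ⟨fun a b h => by cases a <;> cases b <;> simp_all,
   fun y => ⟨!y, by simp⟩⟩

/-- For a binary-output two-player single-system game on one classical bit:
the bit starts at `false`, Alice applies a gate `gA a : Bool → Bool`, Bob applies
`gB b : Bool → Bool` (the four functions `Bool → Bool` are exactly identity,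
bit-flip, erase-to-0 and erase-to-1), and the final bit is the output; the win
indicator is `W a b o` and the prior is `p a b`. If for every input `b` of Bob
the prior-weighted count of inputs where output 0 wins equals that where output
1 wins, then for any strategy there is a strategy using only reversible gates
(bijective functions) that wins with at least the same probability. -/
theorem stmt_16 {A B : Type} [Fintype A] [Fintype B]
    (p : A → B → ℝ) (hp : ∀ a b, 0 ≤ p a b)
    (W : A → B → Bool → Bool)
    (hbal : ∀ b : B,
      (∑ a, p a b * (if W a b false then 1 else 0)) =
      (∑ a, p a b * (if W a b true then 1 else 0)))
    (gA : A → (Bool → Bool)) (gB : B → (Bool → Bool)) :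
    ∃ gA' : A → (Bool → Bool), ∃ gB' : B → (Bool → Bool),
      (∀ a, Function.Bijective (gA' a)) ∧ (∀ b, Function.Bijective (gB' b)) ∧
      (∑ a, ∑ b, p a b * (if W a b (gB b (gA a false)) then 1 else 0)) ≤
      (∑ a, ∑ b, p a b * (if W a b (gB' b (gA' a false)) then 1 else 0)) := by
  classical
  set x : A → Bool := fun a => gA a false with hx
  set Vid : B → ℝ := fun b => ∑ a, p a b * (if W a b (x a) then 1 else 0) with hVid
  set Vfl : B → ℝ := fun b => ∑ a, p a b * (if W a b (!(x a)) then 1 else 0) with hVfl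
  refine ⟨fun a => if x a then Bool.not else id,
    fun b => if Function.Bijective (gB b) then gB b
      else if Vid b ≤ Vfl b then Bool.not else id, ?_, ?_, ?_⟩
  · intro a
    dsimp only
    by_cases h : x a
    · rw [if_pos h]; exact not_bij
    · rw [if_neg h]; exact Function.bijective_id
  · intro b
    dsimp only
    by_cases h : Function.Bijective (gB b)
    · rw [if_pos h]; exact h
    · rw [if_neg h]
      by_cases h2 : Vid b ≤ Vfl b
      · rw [if_pos h2]; exact not_bij
      · rw [if_neg h2]; exact Function.bijective_id
  · have hAx : ∀ a, (if x a then Bool.not else id) false = x a := by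
      intro a; by_cases h : x a <;> simp [h]
    have c1 : (∑ a, ∑ b, p a b * (if W a b (gB b (gA a false)) then 1 else 0)) =
        ∑ b, ∑ a, p a b * (if W a b (gB b (gA a false)) then 1 else 0) :=
      Finset.sum_comm
    have c2 : (∑ a, ∑ b, p a b * (if W a b ((if Function.Bijective (gB b) then gB b
          else if Vid b ≤ Vfl b then Bool.not else id) ((if x a then Bool.not else id) false)) then 1 else 0)) =
        ∑ b, ∑ a, p a b * (if W a b ((if Function.Bijective (gB b) then gB b
          else if Vid b ≤ Vfl b then Bool.not else id) ((if x a then Bool.not else id) false)) then 1 else 0) :=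
      Finset.sum_comm
    rw [c1, c2]
    apply Finset.sum_le_sum
    intro b _
    by_cases h : Function.Bijective (gB b)
    · rw [if_pos h]
      apply le_of_eq
      apply Finset.sum_congr rfl
      intro a _
      rw [hAx a]
    · -- gB b is constant
      have hc : gB b true = gB b false := (bool_bij_or_const (gB b)).resolve_left h
      -- LHS = ∑ p * ind (W a b c) where c = gB b false
      have hL : ∀ a, gB b (x a) = gB b false := by
        intro a; cases hxa : x a <;> simp [hxa, hc]
      have hsum : Vid b + Vfl b =
          (∑ a, p a b * (if W a b false then 1 else 0)) +
          (∑ a, p a b * (if W a b true then 1 else 0)) := by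
        rw [hVid, hVfl, ← Finset.sum_add_distrib, ← Finset.sum_add_distrib]
        apply Finset.sum_congr rfl
        intro a _
        cases hxa : x a <;> simp [hxa] <;> ring
      have hS : (∑ a, p a b * (if W a b (gB b (x a)) then 1 else 0)) =
          (∑ a, p a b * (if W a b false then 1 else 0)) := by
        cases hc0 : gB b false
        · apply Finset.sum_congr rfl; intro a _; rw [hL a, hc0]
        · rw [hbal b]
          apply Finset.sum_congr rfl; intro a _; rw [hL a, hc0]
      have hkey : Vid b + Vfl b =
          2 * (∑ a, p a b * (if W a b (gB b (x a)) then 1 else 0)) := by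
        rw [hsum, hS, ← hbal b]; ring
      rw [if_neg h]
      by_cases h2 : Vid b ≤ Vfl b
      · rw [if_pos h2]
        have : (∑ a, p a b * (if W a b (Bool.not ((if x a then Bool.not else id) false)) then 1 else 0)) = Vfl b := by
          apply Finset.sum_congr rfl; intro a _; rw [hAx a]
        rw [this]; linarith
      · rw [if_neg h2]
        have : (∑ a, p a b * (if W a b (id ((if x a then Bool.not else id) false)) then 1 else 0)) = Vid b := by
          apply Finset.sum_congr rfl; intro a _; rw [hAx a]; rfl
        rw [this]; push_neg at h2; linarith
end
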